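/- arXiv:2502.19876 — 8 statements merged into one kernel-verified Lean document; each statement's English description precedes it below -/
import Mathlib

section
/- Let C be a monoidal category and let X be an object equipped with an associative multiplication m : X ⊗ X ⟶ X with two-sided unit e : 𝟙 ⟶ X and a coassociative comultiplication δ : X ⟶ X ⊗ X with two-sided counit ε : X ⟶ 𝟙. Then the weak Frobenius identity (id_X ⊗ m) ∘ (δ ⊗ id_X) = (m ⊗ id_X) ∘ (id_X ⊗ δ) holds if and only if the full Frobenius identities hold: (id_X ⊗ m) ∘ (δ ⊗ id_X) = δ ∘ m = (m ⊗ id_X) ∘ (id_X ⊗ δ). (Paper: Lemma 2.7, 'an algebra is weak Frobenius if and only if it is Frobenius'.) -/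
open CategoryTheory MonoidalCategory

section FrobeniusAux

variable {C : Type*} [Category C] [MonoidalCategory C]
    (X : C) (m : X ⊗ X ⟶ X) (e : 𝟙_ C ⟶ X) (δ : X ⟶ X ⊗ X)

/-- Feeding the unit into the left input of the right-hand weak Frobenius morphism
recovers the comultiplication. -/
theorem frobenius_aux_lemA (h_unit_l : (e ▷ X) ≫ m = (λ_ X).hom) :
    (λ_ X).inv ≫ (e ▷ X) ≫ (X ◁ δ) ≫ (α_ X X X).inv ≫ (m ▷ X) = δ := by
  rw [← whisker_exchange_assoc, associator_inv_naturality_left_assoc,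
    ← comp_whiskerRight, h_unit_l, ← leftUnitor_inv_naturality_assoc]
  monoidal

/-- The weak Frobenius identity together with associativity and the left unit law
implies the Frobenius identity `m ≫ δ = (δ ▷ X) ≫ α ≫ (X ◁ m)`. -/
theorem frobenius_aux_key
    (h_assoc : (m ▷ X) ≫ m = (α_ X X X).hom ≫ (X ◁ m) ≫ m)
    (h_unit_l : (e ▷ X) ≫ m = (λ_ X).hom)
    (h : (δ ▷ X) ≫ (α_ X X X).hom ≫ (X ◁ m) = (X ◁ δ) ≫ (α_ X X X).inv ≫ (m ▷ X)) :
    m ≫ δ = (δ ▷ X) ≫ (α_ X X X).hom ≫ (X ◁ m) := by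
  have h_assoc' : (X ◁ m) ≫ m = (α_ X X X).inv ≫ (m ▷ X) ≫ m := by
    rw [h_assoc]; simp
  have hA2 : (λ_ X).inv ≫ (e ▷ X) ≫ (δ ▷ X) ≫ (α_ X X X).hom ≫ (X ◁ m) = δ := by
    rw [h]; exact frobenius_aux_lemA X m e δ h_unit_l
  calc m ≫ δ
      = m ≫ (λ_ X).inv ≫ (e ▷ X) ≫ (δ ▷ X) ≫ (α_ X X X).hom ≫ (X ◁ m) := by
        conv_lhs => rw [← hA2]
    _ = (λ_ (X ⊗ X)).inv ≫ ((e ≫ δ) ▷ (X ⊗ X)) ≫ (α_ X X (X ⊗ X)).hom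
          ≫ (X ◁ (X ◁ m)) ≫ (X ◁ m) := by
        rw [leftUnitor_inv_naturality_assoc, whisker_exchange_assoc,
          whisker_exchange_assoc, associator_naturality_right_assoc,
          ← comp_whiskerRight_assoc]
    _ = (λ_ (X ⊗ X)).inv ≫ ((e ≫ δ) ▷ (X ⊗ X)) ≫ (α_ X X (X ⊗ X)).hom
          ≫ (X ◁ ((α_ X X X).inv ≫ (m ▷ X) ≫ m)) := by
        rw [← MonoidalCategory.whiskerLeft_comp, h_assoc']
    _ = ((λ_ X).inv ▷ X) ≫ (((e ≫ δ) ▷ X) ▷ X) ≫ ((α_ X X X).hom ▷ X)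
          ≫ ((X ◁ m) ▷ X) ≫ (α_ X X X).hom ≫ (X ◁ m) := by
        monoidal
    _ = (((λ_ X).inv ≫ (e ▷ X) ≫ (δ ▷ X) ≫ (α_ X X X).hom ≫ (X ◁ m)) ▷ X)
          ≫ (α_ X X X).hom ≫ (X ◁ m) := by
        simp only [comp_whiskerRight, Category.assoc]
    _ = (δ ▷ X) ≫ (α_ X X X).hom ≫ (X ◁ m) := by rw [hA2]

end FrobeniusAux

/-- **Lemma 2.7.** A unital algebra and counital coalgebra is weak Frobenius if and only if
it is Frobenius: the weak Frobenius identity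
`(id_X ⊗ m) ∘ (δ ⊗ id_X) = (m ⊗ id_X) ∘ (id_X ⊗ δ)` holds iff both sides equal `δ ∘ m`. -/
theorem stmt_1 {C : Type*} [Category C] [MonoidalCategory C]
    (X : C) (m : X ⊗ X ⟶ X) (e : 𝟙_ C ⟶ X) (δ : X ⟶ X ⊗ X) (ε : X ⟶ 𝟙_ C)
    (h_assoc : (m ▷ X) ≫ m = (α_ X X X).hom ≫ (X ◁ m) ≫ m)
    (h_unit_l : (e ▷ X) ≫ m = (λ_ X).hom)
    (h_unit_r : (X ◁ e) ≫ m = (ρ_ X).hom)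
    (h_coassoc : δ ≫ (δ ▷ X) ≫ (α_ X X X).hom = δ ≫ (X ◁ δ))
    (h_counit_l : δ ≫ (ε ▷ X) = (λ_ X).inv)
    (h_counit_r : δ ≫ (X ◁ ε) = (ρ_ X).inv) :
    ((δ ▷ X) ≫ (α_ X X X).hom ≫ (X ◁ m) = (X ◁ δ) ≫ (α_ X X X).inv ≫ (m ▷ X))
    ↔ ((δ ▷ X) ≫ (α_ X X X).hom ≫ (X ◁ m) = m ≫ δ
        ∧ (X ◁ δ) ≫ (α_ X X X).inv ≫ (m ▷ X) = m ≫ δ) := by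
  constructor
  · intro h
    have hkey := frobenius_aux_key X m e δ h_assoc h_unit_l h
    exact ⟨hkey.symm, h ▸ hkey.symm⟩
  · rintro ⟨h1, h2⟩
    exact h1.trans h2.symm
end

section
/- Let k be a field and C a k-linear monoidal category. Let (X, m, e, δ, ε) be a Frobenius algebra in C which is connected, i.e. every morphism 𝟙 ⟶ X is a scalar multiple of e. Then X is separable: there exists a scalar λ ∈ k such that m ∘ δ = λ • id_X. (Paper: Lemma 2.15, 'a connected Frobenius algebra is separable'.) -/
open CategoryTheory MonoidalCategory

/-- A Frobenius algebra in a monoidal category: an associative unital multiplication, a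
coassociative counital comultiplication, and the Frobenius identities. -/
structure IsFrobenius {C : Type*} [Category C] [MonoidalCategory C]
    (X : C) (m : X ⊗ X ⟶ X) (e : 𝟙_ C ⟶ X) (δ : X ⟶ X ⊗ X) (ε : X ⟶ 𝟙_ C) : Prop where
  assoc : (m ▷ X) ≫ m = (α_ X X X).hom ≫ (X ◁ m) ≫ m
  unit_left : (e ▷ X) ≫ m = (λ_ X).hom
  unit_right : (X ◁ e) ≫ m = (ρ_ X).hom
  coassoc : δ ≫ (δ ▷ X) ≫ (α_ X X X).hom = δ ≫ (X ◁ δ)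
  counit_left : δ ≫ (ε ▷ X) = (λ_ X).inv
  counit_right : δ ≫ (X ◁ ε) = (ρ_ X).inv
  frob_left : (δ ▷ X) ≫ (α_ X X X).hom ≫ (X ◁ m) = m ≫ δ
  frob_right : (X ◁ δ) ≫ (α_ X X X).inv ≫ (m ▷ X) = m ≫ δ

/-- **Lemma 2.15.** A connected Frobenius algebra in a `k`-linear monoidal category is
separable: there is a scalar `λ` with `m ∘ δ = λ • id_X`. -/
theorem stmt_2 {k : Type*} [Field k] {C : Type*} [Category C] [Preadditive C]
    [MonoidalCategory C] [CategoryTheory.Linear k C] [MonoidalPreadditive C]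
    [MonoidalLinear k C]
    (X : C) (m : X ⊗ X ⟶ X) (e : 𝟙_ C ⟶ X) (δ : X ⟶ X ⊗ X) (ε : X ⟶ 𝟙_ C)
    (hX : IsFrobenius X m e δ ε)
    (h_conn : ∀ u : 𝟙_ C ⟶ X, ∃ c : k, u = c • e) :
    ∃ lam : k, δ ≫ m = lam • 𝟙 X := by
  obtain ⟨c, hc⟩ := h_conn (e ≫ δ ≫ m)
  refine ⟨c, ?_⟩
  have key : m ≫ δ ≫ m = ((δ ≫ m) ▷ X) ≫ m := by
    rw [← Category.assoc, ← hX.frob_left, comp_whiskerRight]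
    simp only [Category.assoc]
    rw [← hX.assoc]
  calc δ ≫ m = (λ_ X).inv ≫ (e ▷ X) ≫ m ≫ (δ ≫ m) := by
        rw [← Category.assoc (e ▷ X), hX.unit_left, Iso.inv_hom_id_assoc]
    _ = (λ_ X).inv ≫ (e ▷ X) ≫ ((δ ≫ m) ▷ X) ≫ m := by rw [key]
    _ = (λ_ X).inv ≫ ((e ≫ δ ≫ m) ▷ X) ≫ m := by
        simp [comp_whiskerRight]
    _ = c • ((λ_ X).inv ≫ (e ▷ X) ≫ m) := by
        rw [hc]; simp
    _ = c • 𝟙 X := by rw [hX.unit_left]; simp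
end

section
/- Let C be a monoidal category and X, Y objects admitting right duals Xᘁ, Yᘁ which in turn admit right duals Xᘁᘁ, Yᘁᘁ. For an object Z with this data and a morphism α : Z ⟶ Zᘁᘁ, define tr(α) : 𝟙 ⟶ 𝟙 as the composite η_Z ≫ (α ⊗ id_{Zᘁ}) ≫ ε', where η_Z : 𝟙 ⟶ Z ⊗ Zᘁ is the coevaluation of the duality (Z, Zᘁ) and ε' : Zᘁᘁ ⊗ Zᘁ ⟶ 𝟙 is the evaluation of the duality (Zᘁ, Zᘁᘁ). Let f : X ⟶ Y and g : Y ⟶ X be morphisms and φX : X ≅ Xᘁᘁ, φY : Y ≅ Yᘁᘁ isomorphisms satisfying the naturality conditions f ≫ φY = φX ≫ (fᘁ)ᘁ and g ≫ φX = φY ≫ (gᘁ)ᘁ, where uᘁ denotes the right adjoint mate of u. Then tr(f ≫ g ≫ φX) = tr(g ≫ f ≫ φY); that is, the φ-twisted trace is symmetric: tr_φ(g ∘ f) = tr_φ(f ∘ g). (Paper: Lemma 2.20, trace symmetry under a quasi-pivotal structure.) -/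
open CategoryTheory MonoidalCategory

/-- The trace of a morphism `a : Z ⟶ Zᘁᘁ`: the composite
`𝟙 ⟶ Z ⊗ Zᘁ ⟶ Zᘁᘁ ⊗ Zᘁ ⟶ 𝟙` built from the coevaluation of `(Z, Zᘁ)` and the
evaluation of `(Zᘁ, Zᘁᘁ)`. -/
noncomputable def qtrace {C : Type*} [Category C] [MonoidalCategory C]
    (Z : C) [HasRightDual Z] [HasRightDual (Zᘁ)] (a : Z ⟶ (Zᘁ)ᘁ) : 𝟙_ C ⟶ 𝟙_ C :=
  η_ Z (Zᘁ) ≫ (a ▷ (Zᘁ)) ≫ ε_ (Zᘁ) ((Zᘁ)ᘁ)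

/-- **Lemma 2.20.** Let `f : X ⟶ Y`, `g : Y ⟶ X`, and let `φX : X ≅ Xᘁᘁ`, `φY : Y ≅ Yᘁᘁ`
satisfy the naturality conditions `f ≫ φY = φX ≫ fᘁᘁ` and `g ≫ φX = φY ≫ gᘁᘁ` (as for a
quasi-pivotal structure). Then the `φ`-twisted trace is symmetric:
`tr_φ(g ∘ f) = tr_φ(f ∘ g)`. -/
theorem stmt_3 {C : Type*} [Category C] [MonoidalCategory C] (X Y : C)
    [HasRightDual X] [HasRightDual Y] [HasRightDual (Xᘁ)] [HasRightDual (Yᘁ)]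
    (f : X ⟶ Y) (g : Y ⟶ X) (φX : X ≅ (Xᘁ)ᘁ) (φY : Y ≅ (Yᘁ)ᘁ)
    (hf : f ≫ φY.hom = φX.hom ≫ (fᘁ)ᘁ)
    (hg : g ≫ φX.hom = φY.hom ≫ (gᘁ)ᘁ) :
    qtrace X (f ≫ g ≫ φX.hom) = qtrace Y (g ≫ f ≫ φY.hom) := by
  rw [hg]
  unfold qtrace
  simp only [comp_whiskerRight, Category.assoc]
  rw [rightAdjointMate_comp_evaluation (gᘁ)]
  slice_lhs 3 4 =>
    rw [← whisker_exchange]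
  slice_lhs 2 3 =>
    rw [← whisker_exchange]
  slice_lhs 1 2 =>
    rw [coevaluation_comp_rightAdjointMate g]
  simp
end

section
/- Let k be a field and C a k-linear monoidal category whose unit 𝟙 is linear-simple, i.e. every endomorphism of 𝟙 is a scalar multiple of id_𝟙. Let (X, m, e, δ, ε) be a Frobenius algebra in C which is connected, i.e. every morphism 𝟙 ⟶ X is a scalar multiple of e. Let α : X ⟶ X be any morphism, and let μ, τ ∈ k be the scalars determined by ε ∘ e = μ • id_𝟙 and ε ∘ m ∘ (α ⊗ id_X) ∘ δ ∘ e = τ • id_𝟙 (τ is the categorical trace of α with respect to the self-duality of X). Then μ • (m ∘ (α ⊗ id_X) ∘ δ) = τ • id_X. (Paper: Lemma 2.22.) -/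
open CategoryTheory MonoidalCategory

/-- **Lemma 2.22.** Let `X` be a connected Frobenius algebra in a `k`-linear monoidal
category whose unit is linear-simple, `a : X ⟶ X` any morphism, `μ` the scalar with
`ε ∘ e = μ • id`, and `τ` the trace of `a`, i.e. the scalar with
`ε ∘ m ∘ (a ⊗ id) ∘ δ ∘ e = τ • id`.  Then `μ • (m ∘ (a ⊗ id) ∘ δ) = τ • id_X`. -/
theorem stmt_4 {k : Type*} [Field k] {C : Type*} [Category C] [Preadditive C]
    [MonoidalCategory C] [CategoryTheory.Linear k C] [MonoidalPreadditive C]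
    [MonoidalLinear k C]
    (X : C) (m : X ⊗ X ⟶ X) (e : 𝟙_ C ⟶ X) (δ : X ⟶ X ⊗ X) (ε : X ⟶ 𝟙_ C)
    (hX : IsFrobenius X m e δ ε)
    (h_simple : ∀ u : 𝟙_ C ⟶ 𝟙_ C, ∃ c : k, u = c • 𝟙 (𝟙_ C))
    (h_conn : ∀ u : 𝟙_ C ⟶ X, ∃ c : k, u = c • e)
    (a : X ⟶ X) (μ τ : k)
    (hμ : e ≫ ε = μ • 𝟙 (𝟙_ C))
    (hτ : e ≫ δ ≫ (a ▷ X) ≫ m ≫ ε = τ • 𝟙 (𝟙_ C)) :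
    μ • (δ ≫ (a ▷ X) ≫ m) = τ • 𝟙 X := by
  set f : X ⟶ X := δ ≫ (a ▷ X) ≫ m with hf_def
  -- f is a right module map
  have hmod : (f ▷ X) ≫ m = m ≫ f := by
    rw [hf_def]
    simp only [comp_whiskerRight, Category.assoc, hX.assoc]
    slice_lhs 2 3 => rw [associator_naturality_left]
    slice_lhs 3 4 => rw [← whisker_exchange]
    slice_lhs 1 3 => rw [hX.frob_left]
    simp [Category.assoc]
  obtain ⟨c, hc⟩ := h_conn (e ≫ f)
  have hf : f = c • 𝟙 X := by
    have h1 : f = (λ_ X).inv ≫ (e ▷ X) ≫ m ≫ f := by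
      rw [← Category.assoc (e ▷ X), hX.unit_left]; simp
    have h2 : (e ▷ X) ≫ m ≫ f = c • (λ_ X).hom := by
      rw [← hmod, ← Category.assoc, ← comp_whiskerRight, hc,
        MonoidalLinear.smul_whiskerRight, Linear.smul_comp, hX.unit_left]
    rw [h1, h2]
    simp
  -- trace computation
  have hτ' : (c * μ) • 𝟙 (𝟙_ C) = τ • 𝟙 (𝟙_ C) := by
    have h2 : e ≫ f ≫ ε = τ • 𝟙 (𝟙_ C) := by
      rw [hf_def]; simpa using hτ
    rw [← Category.assoc, hc] at h2
    rw [← h2]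
    simp [hμ, mul_smul]
  have key : (c * μ) • 𝟙 X = τ • 𝟙 X := by
    have h3 := congrArg (fun u => (λ_ X).inv ≫ (u ▷ X) ≫ (λ_ X).hom) hτ'
    simpa [MonoidalLinear.smul_whiskerRight] using h3
  rw [hf, smul_smul, mul_comm μ c, key]
end

section
/- Let k be a field and C a k-linear monoidal category. Let X be an object equipped with an associative multiplication m with two-sided unit e and a coassociative comultiplication δ with two-sided counit ε, and let X' be similarly equipped with (m', e', δ', ε') and be separable: m' ∘ δ' = λ • id_{X'} for some scalar λ ∈ k. Let f : X' ⟶ X be a unital algebra morphism (f ∘ e' = e, f ∘ m' = m ∘ (f ⊗ f)) and h : X ⟶ X' a counital coalgebra morphism (ε' ∘ h = ε, (h ⊗ h) ∘ δ = δ' ∘ h), and set g := f ∘ h : X ⟶ X. Then g * g = λ • g, where g * g := m ∘ (g ⊗ g) ∘ δ. (Paper: Proposition 3.13, first part.) -/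
open CategoryTheory MonoidalCategory

/-!
Convolution is natural: precomposing with a comultiplicative `h` and postcomposing with a
multiplicative `f` turns convolution over `X'` into convolution over `X`.  Hence
`(h ≫ f) * (h ≫ f) = h ≫ (δ' ≫ m') ≫ f`, and separability of `X'` makes this `λ • (h ≫ f)`.
-/

namespace CategoryTheory.MonoidalCategory

variable {C : Type*} [Category C] [MonoidalCategory C]

def convolution {X : C} (m : X ⊗ X ⟶ X) (δ : X ⟶ X ⊗ X) (a b : X ⟶ X) : X ⟶ X :=
  δ ≫ (a ⊗ₘ b) ≫ m

theorem convolution_id_id {X : C} (m : X ⊗ X ⟶ X) (δ : X ⟶ X ⊗ X) :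
    convolution m δ (𝟙 X) (𝟙 X) = δ ≫ m := by
  rw [convolution, id_tensorHom_id, Category.id_comp]

theorem convolution_comp_comp {X X' : C} (m : X ⊗ X ⟶ X) (δ : X ⟶ X ⊗ X)
    (m' : X' ⊗ X' ⟶ X') (δ' : X' ⟶ X' ⊗ X') (f : X' ⟶ X) (h : X ⟶ X')
    (hf_m : m' ≫ f = (f ⊗ₘ f) ≫ m) (hh_δ : δ ≫ (h ⊗ₘ h) = h ≫ δ') (a b : X' ⟶ X') :
    convolution m δ (h ≫ a ≫ f) (h ≫ b ≫ f) = h ≫ convolution m' δ' a b ≫ f := by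
  calc δ ≫ (h ≫ a ≫ f ⊗ₘ h ≫ b ≫ f) ≫ m
      = (δ ≫ (h ⊗ₘ h)) ≫ (a ⊗ₘ b) ≫ (f ⊗ₘ f) ≫ m := by
        simp only [tensorHom_comp_tensorHom_assoc, Category.assoc]
    _ = h ≫ (δ' ≫ (a ⊗ₘ b) ≫ m') ≫ f := by rw [hh_δ, ← hf_m]; simp only [Category.assoc]

end CategoryTheory.MonoidalCategory

theorem stmt_10_general {k : Type*} [Field k] {C : Type*} [Category C] [Preadditive C]
    [MonoidalCategory C] [CategoryTheory.Linear k C]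
    (X X' : C) (m : X ⊗ X ⟶ X) (δ : X ⟶ X ⊗ X)
    (m' : X' ⊗ X' ⟶ X') (δ' : X' ⟶ X' ⊗ X')
    (lam : k) (h_sep : δ' ≫ m' = lam • 𝟙 X')
    (f : X' ⟶ X) (h : X ⟶ X')
    (hf_m : m' ≫ f = (f ⊗ₘ f) ≫ m)
    (hh_δ : δ ≫ (h ⊗ₘ h) = h ≫ δ') :
    δ ≫ ((h ≫ f) ⊗ₘ (h ≫ f)) ≫ m = lam • (h ≫ f) := by
  have h_conv := convolution_comp_comp m δ m' δ' f h hf_m hh_δ (𝟙 X') (𝟙 X')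
  rw [convolution_id_id, h_sep, Category.id_comp] at h_conv
  rw [← convolution, h_conv, Linear.smul_comp, Category.id_comp, Linear.comp_smul]

/-- **Proposition 3.13 (first part).** Let `X, X'` be unital algebra and counital
coalgebra objects in a `k`-linear monoidal category, with `X'` separable
(`m' ∘ δ' = λ • id`).  If `f : X' ⟶ X` is a unital algebra morphism and `h : X ⟶ X'` a
counital coalgebra morphism, then `g := f ∘ h` satisfies `g * g = λ • g`, where
`g * g := m ∘ (g ⊗ g) ∘ δ`. -/
theorem stmt_10 {k : Type*} [Field k] {C : Type*} [Category C] [Preadditive C]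
    [MonoidalCategory C] [CategoryTheory.Linear k C] [MonoidalPreadditive C]
    [MonoidalLinear k C]
    (X X' : C) (m : X ⊗ X ⟶ X) (e : 𝟙_ C ⟶ X) (δ : X ⟶ X ⊗ X) (ε : X ⟶ 𝟙_ C)
    (m' : X' ⊗ X' ⟶ X') (e' : 𝟙_ C ⟶ X') (δ' : X' ⟶ X' ⊗ X') (ε' : X' ⟶ 𝟙_ C)
    (h_assoc : (m ▷ X) ≫ m = (α_ X X X).hom ≫ (X ◁ m) ≫ m)
    (h_unit_l : (e ▷ X) ≫ m = (λ_ X).hom)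
    (h_unit_r : (X ◁ e) ≫ m = (ρ_ X).hom)
    (h_coassoc : δ ≫ (δ ▷ X) ≫ (α_ X X X).hom = δ ≫ (X ◁ δ))
    (h_counit_l : δ ≫ (ε ▷ X) = (λ_ X).inv)
    (h_counit_r : δ ≫ (X ◁ ε) = (ρ_ X).inv)
    (h_assoc' : (m' ▷ X') ≫ m' = (α_ X' X' X').hom ≫ (X' ◁ m') ≫ m')
    (h_unit_l' : (e' ▷ X') ≫ m' = (λ_ X').hom)
    (h_unit_r' : (X' ◁ e') ≫ m' = (ρ_ X').hom)
    (h_coassoc' : δ' ≫ (δ' ▷ X') ≫ (α_ X' X' X').hom = δ' ≫ (X' ◁ δ'))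
    (h_counit_l' : δ' ≫ (ε' ▷ X') = (λ_ X').inv)
    (h_counit_r' : δ' ≫ (X' ◁ ε') = (ρ_ X').inv)
    (lam : k) (h_sep : δ' ≫ m' = lam • 𝟙 X')
    (f : X' ⟶ X) (h : X ⟶ X')
    (hf_e : e' ≫ f = e)
    (hf_m : m' ≫ f = (f ⊗ₘ f) ≫ m)
    (hh_ε : h ≫ ε' = ε)
    (hh_δ : δ ≫ (h ⊗ₘ h) = h ≫ δ') :
    δ ≫ ((h ≫ f) ⊗ₘ (h ≫ f)) ≫ m = lam • (h ≫ f) :=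
  stmt_10_general X X' m δ m' δ' lam h_sep f h hf_m hh_δ
end

section
/- Let 𝒜 be an abelian category. Consider a commutative square given by morphisms f : A₀ ⟶ A₁, u : A₀ ⟶ A₂, v : A₁ ⟶ A₃, g : A₂ ⟶ A₃ with v ∘ f = g ∘ u, where f and g are monomorphisms. Let c : cokernel(f) ⟶ cokernel(g) be the unique morphism satisfying c ∘ π_f = π_g ∘ v, where π_f : A₁ ⟶ cokernel(f) and π_g : A₃ ⟶ cokernel(g) are the cokernel projections. Then the square is a pullback square (A₀, together with f and u, is a pullback of v and g) if and only if c is a monomorphism. (Paper: Lemma 5.3.) -/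
open CategoryTheory Limits
open scoped Pseudoelement
attribute [local instance] CategoryTheory.Abelian.Pseudoelement.objectToSort CategoryTheory.Abelian.Pseudoelement.homToFun

/-- **Lemma 5.3.** In an abelian category, a commutative square with monomorphisms
`f : A₀ ⟶ A₁` and `g : A₂ ⟶ A₃` is a pullback square if and only if the induced morphism
`c : cokernel f ⟶ cokernel g` (the unique one with `π_f ≫ c = v ≫ π_g`) is a
monomorphism. -/
theorem stmt_14 {𝒜 : Type*} [Category 𝒜] [Abelian 𝒜]
    {A₀ A₁ A₂ A₃ : 𝒜} (f : A₀ ⟶ A₁) (u : A₀ ⟶ A₂) (v : A₁ ⟶ A₃) (g : A₂ ⟶ A₃)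
    [Mono f] [Mono g] (hcomm : f ≫ v = u ≫ g)
    (c : cokernel f ⟶ cokernel g)
    (hc : cokernel.π f ≫ c = v ≫ cokernel.π g) :
    IsPullback f u v g ↔ Mono c := by
  constructor
  · intro h
    apply Abelian.Pseudoelement.mono_of_zero_of_map_zero
    intro x hx
    obtain ⟨b, hb⟩ := Abelian.Pseudoelement.pseudo_surjective_of_epi (cokernel.π f) x
    have hvb : (cokernel.π g) (v b) = 0 := by
      rw [← Abelian.Pseudoelement.comp_apply, ← hc, Abelian.Pseudoelement.comp_apply, hb, hx]
    have hex : (ShortComplex.mk g (cokernel.π g) (cokernel.condition g)).Exact :=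
      ShortComplex.exact_of_g_is_cokernel _ (cokernelIsCokernel g)
    obtain ⟨a, ha⟩ := Abelian.Pseudoelement.pseudo_exact_of_exact hex (v b) hvb
    obtain ⟨s, hs1, hs2⟩ := Abelian.Pseudoelement.pseudo_pullback
      (f := v) (g := g) (p := b) (q := a) ha.symm
    have hfst : pullback.fst v g = h.isoPullback.inv ≫ f := by
      rw [Iso.eq_inv_comp, h.isoPullback_hom_fst]
    have hb' : b = f (h.isoPullback.inv s) := by
      rw [← hs1, hfst, Abelian.Pseudoelement.comp_apply]
    rw [← hb, hb', ← Abelian.Pseudoelement.comp_apply, cokernel.condition,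
      Abelian.Pseudoelement.zero_apply]
  · intro hcmono
    refine IsPullback.of_isLimit (PullbackCone.IsLimit.mk hcomm
      (fun s => Abelian.monoLift f s.fst ?_) (fun s => ?_) (fun s => ?_) (fun s m hm₁ hm₂ => ?_)
      )
    · have h1 : (s.fst ≫ cokernel.π f) ≫ c = 0 ≫ c := by
        rw [Category.assoc, hc, ← Category.assoc, s.condition, Category.assoc,
          cokernel.condition, comp_zero, zero_comp]
      exact (cancel_mono c).1 h1
    · exact Abelian.monoLift_comp f s.fst _
    · rw [← cancel_mono g, Category.assoc, ← hcomm, ← Category.assoc,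
        Abelian.monoLift_comp, s.condition]
    · rw [← cancel_mono f, hm₁, Abelian.monoLift_comp]
end

section
/- Let n be a positive natural number and let M be an n × n complex matrix such that for every nonzero idempotent n × n complex matrix b (i.e. b * b = b and b ≠ 0), the trace of b * M * b is a positive real number: there exists r : ℝ with 0 < r and trace(b * M * b) = r. Then M is a positive real scalar multiple of the identity matrix: there exists c : ℝ with 0 < c and M = c • 1. (Paper: Lemma 6.15.) -/
open Matrix

private lemma trace_vecMulVec_mul {n : ℕ} (x y : Fin n → ℂ) (M : Matrix (Fin n) (Fin n) ℂ) :
    (vecMulVec x y * M).trace = y ⬝ᵥ (M *ᵥ x) := by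
  simp only [Matrix.trace, Matrix.diag, Matrix.mul_apply, vecMulVec_apply,
    dotProduct, Matrix.mulVec, Finset.mul_sum]
  rw [Finset.sum_comm]
  refine Finset.sum_congr rfl fun k _ => Finset.sum_congr rfl fun a _ => by ring

private lemma vecMulVec_idem {n : ℕ} (x y : Fin n → ℂ) (hxy : y ⬝ᵥ x = 1) :
    vecMulVec x y * vecMulVec x y = vecMulVec x y := by
  ext a c
  simp only [Matrix.mul_apply, vecMulVec_apply]
  have : ∀ k, (x a * y k) * (x k * y c) = (x a * y c) * (y k * x k) := fun k => by ring
  rw [Finset.sum_congr rfl fun k _ => this k, ← Finset.mul_sum]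
  have : ∑ k, y k * x k = y ⬝ᵥ x := rfl
  rw [this, hxy, mul_one]

private lemma vecMulVec_ne_zero {n : ℕ} (x y : Fin n → ℂ) (hxy : y ⬝ᵥ x = 1) :
    vecMulVec x y ≠ 0 := by
  intro h0
  have h1 : (y ⬝ᵥ x) ≠ 0 := by rw [hxy]; exact one_ne_zero
  obtain ⟨k, _, hk⟩ := Finset.exists_ne_zero_of_sum_ne_zero h1
  have := congrFun (congrFun h0 k) k
  rw [vecMulVec_apply, Matrix.zero_apply] at this
  exact hk (by rw [mul_comm] at this; exact this)

private lemma key {n : ℕ} (M : Matrix (Fin n) (Fin n) ℂ)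
    (h : ∀ b : Matrix (Fin n) (Fin n) ℂ, b * b = b → b ≠ 0 →
      ∃ r : ℝ, 0 < r ∧ (b * M * b).trace = (r : ℂ))
    (x y : Fin n → ℂ) (hxy : y ⬝ᵥ x = 1) :
    ∃ r : ℝ, 0 < r ∧ y ⬝ᵥ (M *ᵥ x) = (r : ℂ) := by
  have hidem := vecMulVec_idem x y hxy
  obtain ⟨r, hr, htr⟩ := h (vecMulVec x y) hidem (vecMulVec_ne_zero x y hxy)
  refine ⟨r, hr, ?_⟩
  rw [Matrix.trace_mul_comm, ← Matrix.mul_assoc, hidem, trace_vecMulVec_mul] at htr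
  exact htr

/-- **Lemma 6.15.** If `M ∈ M_n(ℂ)` is such that `trace(b * M * b)` is a positive real
number for every nonzero idempotent `b ∈ M_n(ℂ)`, then `M` is a positive real scalar
multiple of the identity matrix. -/
theorem stmt_17 (n : ℕ) (hn : 0 < n) (M : Matrix (Fin n) (Fin n) ℂ)
    (h : ∀ b : Matrix (Fin n) (Fin n) ℂ, b * b = b → b ≠ 0 →
      ∃ r : ℝ, 0 < r ∧ (b * M * b).trace = (r : ℂ)) :
    ∃ c : ℝ, 0 < c ∧ M = (c : ℂ) • 1 := by
  set e : Fin n → (Fin n → ℂ) := fun i => Pi.single i 1 with he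
  have hdot : ∀ i j : Fin n, e i ⬝ᵥ (M *ᵥ e j) = M i j := by
    intro i j
    simp [he, Matrix.mulVec_single, dotProduct_single]
  have hee : ∀ i : Fin n, e i ⬝ᵥ e i = (1 : ℂ) := by
    intro i; simp [he, dotProduct, Pi.single_apply]
  have heo : ∀ i j : Fin n, i ≠ j → e i ⬝ᵥ e j = (0 : ℂ) := by
    intro i j hij; simp [he, dotProduct, Pi.single_apply, hij, Ne.symm hij]
  -- diagonal entries are positive reals
  have hdiag : ∀ i : Fin n, ∃ r : ℝ, 0 < r ∧ M i i = (r : ℂ) := by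
    intro i
    obtain ⟨r, hr, htr⟩ := key M h (e i) (e i) (hee i)
    exact ⟨r, hr, by rwa [hdot] at htr⟩
  -- off diagonal entries vanish
  have hoff : ∀ i j : Fin n, i ≠ j → M i j = 0 := by
    intro i j hij
    have haux : ∀ t : ℂ, ∃ r : ℝ, 0 < r ∧ M j j + t * M i j = (r : ℂ) := by
      intro t
      have hd : (e j + t • e i) ⬝ᵥ e j = 1 := by
        rw [add_dotProduct, smul_dotProduct, hee, heo i j hij, smul_zero, add_zero]
      obtain ⟨r, hr, htr⟩ := key M h (e j) (e j + t • e i) hd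
      refine ⟨r, hr, ?_⟩
      rw [add_dotProduct, smul_dotProduct, hdot, hdot, smul_eq_mul] at htr
      exact htr
    obtain ⟨r0, _, h0⟩ := hdiag j
    obtain ⟨r1, _, h1⟩ := haux 1
    obtain ⟨r2, _, h2⟩ := haux Complex.I
    rw [h0, one_mul] at h1
    rw [h0] at h2
    have ha : M i j = ((r1 - r0 : ℝ) : ℂ) := by
      push_cast
      rw [← h1]; ring
    have hb : Complex.I * ((r1 - r0 : ℝ) : ℂ) = ((r2 - r0 : ℝ) : ℂ) := by
      rw [← ha]
      push_cast
      rw [← h2]; ring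
    have him := congrArg Complex.im hb
    simp [Complex.mul_im] at him
    rw [ha, him]
    norm_num
  -- diagonal entries coincide
  have heq : ∀ i j : Fin n, i ≠ j → M i i = M j j := by
    intro i j hij
    set x : Fin n → ℂ := e i + e j with hx
    set y : Fin n → ℂ := Complex.I • e i + (1 - Complex.I) • e j with hy
    have hd : y ⬝ᵥ x = 1 := by
      rw [hy, hx]
      simp only [add_dotProduct, smul_dotProduct, dotProduct_add,
        hee, heo i j hij, heo j i hij.symm, smul_eq_mul]
      ring
    obtain ⟨r, hr, htr⟩ := key M h x y hd
    rw [hy, hx, Matrix.mulVec_add, add_dotProduct, smul_dotProduct, smul_dotProduct,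
      dotProduct_add, dotProduct_add, hdot, hdot, hdot, hdot,
      hoff i j hij, hoff j i hij.symm] at htr
    obtain ⟨ri, _, hi⟩ := hdiag i
    obtain ⟨rj, _, hj⟩ := hdiag j
    rw [hi, hj] at htr
    have him := congrArg Complex.im htr
    simp [Complex.mul_im, Complex.add_im, Complex.sub_im] at him
    rw [hi, hj]
    norm_cast
    linarith
  -- conclude
  have i0 : Fin n := ⟨0, hn⟩
  obtain ⟨c, hc, hc0⟩ := hdiag i0
  refine ⟨c, hc, ?_⟩
  ext i j
  by_cases hij : i = j
  · subst hij
    have : M i i = (c : ℂ) := by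
      by_cases hi : i = i0
      · rw [hi]; exact hc0
      · rw [heq i i0 hi]; exact hc0
    rw [this]
    simp [Matrix.one_apply]
  · rw [hoff i j hij]
    simp [Matrix.one_apply, hij]
end

section
/- Let U be a finite-dimensional complex vector space of dimension n and let κ : U → U → ℂ be a bilinear form that is nondegenerate, meaning that the only u ∈ U with κ(u, v) = 0 for all v ∈ U is u = 0, and the only v ∈ U with κ(u, v) = 0 for all u ∈ U is v = 0. For a basis e = (e₁, …, e_n) of U, let M_e : U → U be the conjugate-linear map (semilinear with respect to complex conjugation) determined on basis vectors by M_e(e_j) = Σ_i conj(κ(e_i, e_j)) • e_i. Let V ⊆ U be a subspace. Then the restriction of κ to V is nondegenerate (i.e. the only v ∈ V with κ(v, w) = 0 for all w ∈ V is v = 0) if and only if there exists a basis e of U such that M_e maps V onto V, i.e. M_e(V) = V. (Paper: Lemma 4.4, a subspace is nondegenerate iff it is rigid invariant with respect to some basis.) -/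
/-!
For the Hermitian product making `e` orthonormal, `M_e` is characterised by `⟨y, M_e x⟩ = κ y x`.
Hence if `v = M_e x` with `x ∈ V` and `v` is κ-orthogonal to `V`, then `0 = κ v x = ‖v‖²`.
Conversely, if `κ` is nondegenerate on `V`, then `U = V ⊕ W` with `W` the left κ-orthogonal of `V`.
For a basis adapted to this splitting, `M_e x = ∑ conj (κ (e i) x) • e i` has no component along
`W` when `x ∈ V`, so `M_e` maps `V` into itself; being an injective ℝ-linear map, it maps `V` onto
itself.
-/

open scoped ComplexConjugate

/-- The conjugate-linear map `M_e` associated with a bilinear form `κ` and a basis `e`: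
determined by `M_e(e_j) = Σ_i conj(κ(e_i, e_j)) • e_i`, extended conjugate-linearly, i.e.
`M_e(Σ_j c_j e_j) = Σ_j conj(c_j) • Σ_i conj(κ(e_i, e_j)) • e_i`. -/
noncomputable def rigidMap {U : Type*} [AddCommGroup U] [Module ℂ U]
    (κ : U →ₗ[ℂ] U →ₗ[ℂ] ℂ) {n : ℕ} (e : Module.Basis (Fin n) ℂ U) : U → U :=
  fun x => ∑ j, conj (e.repr x j) • ∑ i, conj (κ (e i) (e j)) • e i

section

variable {K E : Type*} [Field K] [AddCommGroup E] [Module K E] [FiniteDimensional K E]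

theorem Submodule.exists_basis_mem_or_mem_of_isCompl {p q : Submodule K E} (h : IsCompl p q) :
    ∃ e : Module.Basis (Fin (Module.finrank K E)) K E, ∀ i, e i ∈ p ∨ e i ∈ q := by
  let e₀ := ((Module.finBasis K p).prod (Module.finBasis K q)).map (p.prodEquivOfIsCompl q h)
  refine ⟨e₀.reindex (e₀.indexEquiv (Module.finBasis K E)), fun i => ?_⟩
  rw [Module.Basis.reindex_apply]
  rcases (e₀.indexEquiv (Module.finBasis K E)).symm i with j | j
  · exact .inl (by simp [e₀])
  · exact .inr (by simp [e₀])

theorem LinearMap.BilinForm.isCompl_orthogonal_flip {B : LinearMap.BilinForm K E}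
    {p : Submodule K E} (hp : ∀ v ∈ p, (∀ w ∈ p, B v w = 0) → v = 0) :
    IsCompl p (LinearMap.BilinForm.orthogonal B.flip p) := by
  refine (Submodule.isCompl_iff_disjoint _ _ ?_).mpr ?_
  · rw [LinearMap.BilinForm.finrank_add_finrank_orthogonal']
    exact Nat.le_add_right _ _
  · rw [Submodule.disjoint_def]
    exact fun v hv hvo => hp v hv hvo

end

section

variable {U : Type*} [AddCommGroup U] [Module ℂ U] (κ : U →ₗ[ℂ] U →ₗ[ℂ] ℂ) {n : ℕ}
  (e : Module.Basis (Fin n) ℂ U)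

theorem rigidMap_apply (x : U) : rigidMap κ e x = ∑ i, conj (κ (e i) x) • e i := by
  conv_rhs => rw [← e.sum_repr x]
  simp only [rigidMap, map_sum, map_smul, smul_eq_mul, map_mul, Finset.smul_sum, smul_smul]
  rw [Finset.sum_comm]
  simp only [Finset.sum_smul, mul_comm]

theorem repr_rigidMap (x : U) (i : Fin n) : e.repr (rigidMap κ e x) i = conj (κ (e i) x) := by
  simp [rigidMap_apply, Finsupp.single_apply]

theorem rigidMap_add (x y : U) : rigidMap κ e (x + y) = rigidMap κ e x + rigidMap κ e y :=
  e.repr.injective <| Finsupp.ext fun i => by simp [repr_rigidMap]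

theorem rigidMap_smul (c : ℂ) (x : U) : rigidMap κ e (c • x) = conj c • rigidMap κ e x :=
  e.repr.injective <| Finsupp.ext fun i => by simp [repr_rigidMap]

noncomputable def rigidMapReal : U →ₗ[ℝ] U where
  toFun := rigidMap κ e
  map_add' := rigidMap_add κ e
  map_smul' r x := by
    rw [RingHom.id_apply, ← Complex.coe_smul, ← Complex.coe_smul, rigidMap_smul,
      Complex.conj_ofReal]

theorem rigidMap_eq_zero_iff (x : U) : rigidMap κ e x = 0 ↔ ∀ i, κ (e i) x = 0 := by
  rw [← e.repr.map_eq_zero_iff, Finsupp.ext_iff]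
  simp only [repr_rigidMap, Finsupp.coe_zero, Pi.zero_apply, map_eq_zero]

theorem apply_rigidMap_self (x : U) :
    κ (rigidMap κ e x) x = ∑ i, (Complex.normSq (κ (e i) x) : ℂ) := by
  simp only [rigidMap_apply, map_sum, map_smul, LinearMap.sum_apply, LinearMap.smul_apply,
    smul_eq_mul, Complex.normSq_eq_conj_mul_self]

theorem rigidMap_eq_zero_of_apply_rigidMap_self_eq_zero {x : U}
    (h : κ (rigidMap κ e x) x = 0) : rigidMap κ e x = 0 := by
  rw [apply_rigidMap_self] at h
  norm_cast at h
  rw [Finset.sum_eq_zero_iff_of_nonneg fun i _ => Complex.normSq_nonneg _] at h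
  simpa [rigidMap_eq_zero_iff] using h

theorem rigidMap_injective (hκ : ∀ v : U, (∀ u : U, κ u v = 0) → v = 0) :
    Function.Injective (rigidMap κ e) := by
  change Function.Injective (rigidMapReal κ e)
  refine (injective_iff_map_eq_zero _).mpr fun x hx => hκ x fun u => ?_
  have hbasis : ∀ i, κ.flip x (e i) = 0 := (rigidMap_eq_zero_iff κ e x).mp hx
  exact LinearMap.congr_fun (e.ext (f₂ := 0) hbasis) u

theorem mapsTo_rigidMap {V : Submodule ℂ U} (h : ∀ i, e i ∈ V ∨ ∀ v ∈ V, κ (e i) v = 0) :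
    Set.MapsTo (rigidMap κ e) V V := by
  intro x hx
  rw [rigidMap_apply]
  refine V.sum_mem fun i _ => ?_
  rcases h i with hi | hi
  · exact V.smul_mem _ hi
  · simp [hi x hx]

theorem image_rigidMap_eq_of_mapsTo [FiniteDimensional ℂ U]
    (hinj : Function.Injective (rigidMap κ e)) {V : Submodule ℂ U}
    (h : Set.MapsTo (rigidMap κ e) V V) : rigidMap κ e '' V = V := by
  have hsurj : Set.SurjOn (rigidMapReal κ e) (V.restrictScalars ℝ) (V.restrictScalars ℝ) :=
    (LinearMap.injOn_iff_surjOn (f := rigidMapReal κ e) (p := V.restrictScalars ℝ) h).mp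
      hinj.injOn
  exact hsurj.image_eq_of_mapsTo h

end

theorem stmt_18_general {U : Type*} [AddCommGroup U] [Module ℂ U] [FiniteDimensional ℂ U]
    (κ : U →ₗ[ℂ] U →ₗ[ℂ] ℂ)
    (hnd_right : ∀ v : U, (∀ u : U, κ u v = 0) → v = 0)
    (V : Submodule ℂ U) :
    (∀ v ∈ V, (∀ w ∈ V, κ v w = 0) → v = 0) ↔
      ∃ e : Module.Basis (Fin (Module.finrank ℂ U)) ℂ U,
        rigidMap κ e '' (V : Set U) = (V : Set U) := by
  constructor
  · intro hV
    obtain ⟨e, he⟩ :=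
      Submodule.exists_basis_mem_or_mem_of_isCompl (LinearMap.BilinForm.isCompl_orthogonal_flip hV)
    have hmaps : Set.MapsTo (rigidMap κ e) V V := mapsTo_rigidMap κ e he
    exact ⟨e, image_rigidMap_eq_of_mapsTo κ e (rigidMap_injective κ e hnd_right) hmaps⟩
  · rintro ⟨e, he⟩ v hv hperp
    obtain ⟨x, hx, rfl⟩ : v ∈ rigidMap κ e '' V := by rwa [he]
    exact rigidMap_eq_zero_of_apply_rigidMap_self_eq_zero κ e (hperp x hx)

/-- **Lemma 4.4.** Let `U` be a finite-dimensional complex vector space with a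
nondegenerate bilinear form `κ`, and `V ⊆ U` a subspace.  Then the restriction of `κ` to
`V` is nondegenerate if and only if there is a basis `e` of `U` such that the associated
conjugate-linear map `M_e` maps `V` onto `V` (i.e. `V` is `e`-rigid invariant). -/
theorem stmt_18 {U : Type*} [AddCommGroup U] [Module ℂ U] [FiniteDimensional ℂ U]
    (κ : U →ₗ[ℂ] U →ₗ[ℂ] ℂ)
    (hnd_left : ∀ u : U, (∀ v : U, κ u v = 0) → u = 0)
    (hnd_right : ∀ v : U, (∀ u : U, κ u v = 0) → v = 0)
    (V : Submodule ℂ U) :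
    (∀ v ∈ V, (∀ w ∈ V, κ v w = 0) → v = 0) ↔
      ∃ e : Module.Basis (Fin (Module.finrank ℂ U)) ℂ U,
        rigidMap κ e '' (V : Set U) = (V : Set U) :=
  stmt_18_general κ hnd_right V
end
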